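/- In the orthogonal setting, for all a, b ∈ V and every X ∈ gl(V)_B one has ⁅D_{a,b}, ⁅D_{a,b}, X⁆⁆ = B(a,b)·(D_{a,Xb} + D_{b,Xa}) − 2·B(a, X b)·D_{a,b} + B(a,a)·D_{Xb,b} + B(b,b)·D_{Xa,a}. -/

import Mathlib

/-!
Every skew `X` acts on the `D_{c,d}` by the derivation rule `⁅X, D_{c,d}⁆ = D_{Xc,d} + D_{c,Xd}`,
and for symmetric `B` the `D_{a,b}` are themselves skew. Applying the rule twice with
`D = D_{a,b}` gives `⁅D, ⁅D, X⁆⁆ = -(D_{D Xa, b} + D_{Xa, D b} + D_{D a, Xb} + D_{a, D Xb})`,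
and `B(u, Xu) = 0` (this is where `2 ≠ 0` enters) collapses `D Xa` to `B(a,Xb)·a` and `D Xb` to
`B(a,Xb)·b`; bilinearity and antisymmetry of `D` finish the computation.
-/

/-- The endomorphism `D_{a,b} : x ↦ B(x,a)·b − B(x,b)·a` of the orthogonal setting. -/
def DOrth {k V : Type*} [Field k] [AddCommGroup V] [Module k V]
    (B : LinearMap.BilinForm k V) (a b : V) : Module.End k V :=
  (B.flip a).smulRight b - (B.flip b).smulRight a

namespace DOrth

variable {k V : Type*} [Field k] [AddCommGroup V] [Module k V] (B : LinearMap.BilinForm k V)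

@[simp]
theorem apply (a b x : V) : DOrth B a b x = B x a • b - B x b • a := rfl

theorem swap (a b : V) : DOrth B b a = -DOrth B a b := by
  ext x
  simp only [apply, LinearMap.neg_apply, neg_sub]

theorem smul_left (c : k) (a b : V) : DOrth B (c • a) b = c • DOrth B a b := by
  ext x
  simp only [apply, LinearMap.smul_apply, map_smul, smul_eq_mul, smul_sub, mul_smul]
  module

theorem sub_left (a a' b : V) : DOrth B (a - a') b = DOrth B a b - DOrth B a' b := by
  ext x
  simp only [apply, LinearMap.sub_apply, map_sub, sub_smul]
  module

theorem smul_right (c : k) (a b : V) : DOrth B a (c • b) = c • DOrth B a b := by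
  rw [swap, smul_left, swap B b a, smul_neg]

theorem sub_right (a b b' : V) : DOrth B a (b - b') = DOrth B a b - DOrth B a b' := by
  rw [swap, sub_left, swap B b a, swap B b' a, neg_sub_neg, neg_sub]

theorem lie_eq_of_skew {X : Module.End k V} (hX : ∀ u v : V, B (X u) v = -B u (X v)) (c d : V) :
    ⁅X, DOrth B c d⁆ = DOrth B (X c) d + DOrth B c (X d) := by
  ext x
  simp only [Ring.lie_def, LinearMap.sub_apply, LinearMap.add_apply, Module.End.mul_apply, apply,
    map_sub, map_smul, hX x]
  module

theorem skew (hsymm : ∀ u v : V, B u v = B v u) (a b u v : V) :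
    B (DOrth B a b u) v = -B u (DOrth B a b v) := by
  simp only [apply, map_sub, map_smul, LinearMap.sub_apply, LinearMap.smul_apply, smul_eq_mul,
    hsymm b v, hsymm a v]
  ring

end DOrth

section SkewEndomorphism

variable {k V : Type*} [Field k] [AddCommGroup V] [Module k V] {B : LinearMap.BilinForm k V}
  {X : Module.End k V}

theorem apply_self_eq_zero_of_skew (hchar : (2 : k) ≠ 0) (hsymm : ∀ u v : V, B u v = B v u)
    (hX : ∀ u v : V, B (X u) v = -B u (X v)) (u : V) : B u (X u) = 0 := by
  have h : (2 : k) * B u (X u) = 0 := by linear_combination hX u u - hsymm (X u) u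
  exact (mul_eq_zero.mp h).resolve_left hchar

theorem apply_swap_of_skew (hsymm : ∀ u v : V, B u v = B v u)
    (hX : ∀ u v : V, B (X u) v = -B u (X v)) (u v : V) : B v (X u) = -B u (X v) := by
  rw [← hsymm, hX]

end SkewEndomorphism

/-- In the orthogonal setting, for every `X ∈ gl(V)_B`:
`⁅D_{a,b}, ⁅D_{a,b}, X⁆⁆ = B(a,b)·(D_{a,Xb} + D_{b,Xa}) − 2·B(a,Xb)·D_{a,b}
  + B(a,a)·D_{Xb,b} + B(b,b)·D_{Xa,a}`. -/
theorem stmt12 {k V : Type*} [Field k] [AddCommGroup V] [Module k V]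
    (hchar : (2 : k) ≠ 0)
    (B : LinearMap.BilinForm k V) (hsymm : ∀ u v : V, B u v = B v u) (a b : V) :
    ∀ X : Module.End k V, (∀ u v : V, B (X u) v = -B u (X v)) →
      ⁅DOrth B a b, ⁅DOrth B a b, X⁆⁆ =
        B a b • (DOrth B a (X b) + DOrth B b (X a)) - (2 * B a (X b)) • DOrth B a b
          + B a a • DOrth B (X b) b + B b b • DOrth B (X a) a := by
  intro X hX
  -- the commutator Lie ring structure of an associative ring is not a global instance
  let : LieRing (Module.End k V) := LieRing.ofAssociativeRing
  have hXa : DOrth B a b (X a) = B a (X b) • a := by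
    rw [DOrth.apply, hsymm, apply_self_eq_zero_of_skew hchar hsymm hX, hsymm,
      apply_swap_of_skew hsymm hX, zero_smul, zero_sub, neg_smul, neg_neg]
  have hXb : DOrth B a b (X b) = B a (X b) • b := by
    rw [DOrth.apply, hX, hX, apply_self_eq_zero_of_skew hchar hsymm hX, apply_swap_of_skew hsymm hX,
      neg_neg, neg_zero, zero_smul, sub_zero]
  have hD := DOrth.lie_eq_of_skew B (DOrth.skew B hsymm a b)
  rw [← lie_skew (DOrth B a b) X, DOrth.lie_eq_of_skew B hX, lie_neg, lie_add, hD, hD, hXa, hXb]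
  simp only [DOrth.apply, DOrth.sub_left, DOrth.sub_right, DOrth.smul_left, DOrth.smul_right]
  rw [DOrth.swap B (X a) b, DOrth.swap B b (X b), hsymm b a]
  module
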